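/- If a preorder on a type α is well-founded, then the Dershowitz–Manna order on finite multisets over α is well-founded. -/
import Mathlib

def DMLt {α : Type*} (lt : α → α → Prop) (M N : Multiset α) : Prop :=
  ∃ X Y Z : Multiset α, Z ≠ 0 ∧ M = X + Y ∧ N = X + Z ∧ ∀ y ∈ Y, ∃ z ∈ Z, lt y z

def DMLe {α : Type*} (lt : α → α → Prop) (M N : Multiset α) : Prop :=
  DMLt lt M N ∨ M = N

open Relation Multiset in
private lemma dm_aux {α : Type*} [Preorder α] :
    ∀ n (Z : Multiset α), Multiset.card Z = n → Z ≠ 0 → ∀ X Y : Multiset α,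
      (∀ y ∈ Y, ∃ z ∈ Z, y < z) →
      TransGen (CutExpand ((· < ·) : α → α → Prop)) (X + Y) (X + Z) := by
  intro n
  induction n using Nat.strong_induction_on with
  | _ n IH =>
    intro Z hcard hZ X Y hY
    obtain ⟨a, ha⟩ := Multiset.exists_mem_of_ne_zero hZ
    classical
    set Z' := Z.erase a with hZ'
    have hZeq : Z = a ::ₘ Z' := (Multiset.cons_erase ha).symm
    set Y₁ := Y.filter (fun y => ∃ z ∈ Z', y < z) with hY₁
    set Y₂ := Y.filter (fun y => ¬ ∃ z ∈ Z', y < z) with hY₂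
    have hYeq : Y = Y₁ + Y₂ := by
      rw [hY₁, hY₂, Multiset.filter_add_not]
    have hY₂a : ∀ y ∈ Y₂, y < a := by
      intro y hy
      rw [hY₂, Multiset.mem_filter] at hy
      obtain ⟨z, hz, hlt⟩ := hY y hy.1
      rw [hZeq, Multiset.mem_cons] at hz
      rcases hz with rfl | hz
      · exact hlt
      · exact absurd ⟨z, hz, hlt⟩ hy.2
    have step1 : CutExpand ((· < ·) : α → α → Prop) (X + Y) ((X + Y₁) + {a}) := by
      refine ⟨Y₂, a, fun x hx => hY₂a x hx, ?_⟩
      rw [hYeq]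
      abel
    by_cases hZ'0 : Z' = 0
    · refine TransGen.single ?_
      have : Y₁ = 0 := by
        rw [hY₁, Multiset.filter_eq_nil]
        rintro y hy ⟨z, hz, _⟩
        rw [hZ'0] at hz; exact absurd hz (Multiset.notMem_zero z)
      rw [this, add_zero] at step1
      rw [hZeq, hZ'0]
      simpa using step1
    · have hcard' : Multiset.card Z' < n := by
        subst hcard
        rw [hZeq]; simp
      have h2 : TransGen (CutExpand ((· < ·) : α → α → Prop))
          ((X + {a}) + Y₁) ((X + {a}) + Z') := by
        refine IH _ hcard' Z' rfl hZ'0 _ _ ?_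
        intro y hy
        rw [hY₁, Multiset.mem_filter] at hy
        exact hy.2
      refine TransGen.head step1 ?_
      have e1 : (X + Y₁) + {a} = (X + {a}) + Y₁ := by abel
      have e2 : X + Z = (X + {a}) + Z' := by
        rw [hZeq, ← Multiset.singleton_add]; abel
      rw [e1, e2]
      exact h2

theorem dm_wellFounded {α : Type*} [Preorder α]
    (h : WellFounded ((· < ·) : α → α → Prop)) :
    WellFounded (DMLt ((· < ·) : α → α → Prop)) := by
  have sub : ∀ M N : Multiset α, DMLt ((· < ·) : α → α → Prop) M N →
      Relation.TransGen (Relation.CutExpand ((· < ·) : α → α → Prop)) M N := by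
    rintro M N ⟨X, Y, Z, hZ, rfl, rfl, hY⟩
    exact dm_aux _ Z rfl hZ X Y hY
  exact Subrelation.wf (fun {M N} hMN => sub M N hMN) h.cutExpand.transGen
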